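/- arXiv:1806.02681 — 3 statements merged into one kernel-verified Lean document; each statement's English description precedes it below -/
import Mathlib

section
/- Let C be a nondegenerate linear code of length n and dimension k over F_q. Then for 1 ≤ t ≤ k, n - d_t = max{ #R : R ⊆ {1,...,n} and dim(C(R)) ≤ k - t }, where C(R) denotes the projection of C onto the coordinates in R and d_t is the t-th generalized Hamming weight. -/
set_option synthInstance.maxHeartbeats 1000000


/-- The `t`-th generalized Hamming weight of a linear code `C`: the minimal
support size of a `t`-dimensional linear subcode of `C`. -/
noncomputable def gweight {F : Type*} [Field F] {n : ℕ}
    (C : Submodule F (Fin n → F)) (t : ℕ) : ℕ :=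
  sInf { w | ∃ E : Submodule F (Fin n → F), E ≤ C ∧ Module.finrank F E = t ∧
    {i | ∃ v ∈ E, v i ≠ 0}.ncard = w }

/-- The projection of a code onto the coordinates indexed by `R`. -/
noncomputable def proj {F : Type*} [Field F] {n : ℕ}
    (C : Submodule F (Fin n → F)) (R : Finset (Fin n)) :
    Submodule F (R → F) :=
  C.map (LinearMap.funLeft F F (fun j : R => (j : Fin n)))

/-- Any finite-dimensional space has subspaces of every dimension up to its own. -/
lemma exists_le_finrank_eq {F V : Type*} [Field F] [AddCommGroup V] [Module F V]
    (K : Submodule F V) {t : ℕ} (h : t ≤ Module.finrank F K) :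
    ∃ E : Submodule F V, E ≤ K ∧ Module.finrank F E = t := by
  obtain ⟨f, hf⟩ := exists_linearIndependent_of_le_finrank (R := F) (M := K) h
  have hg : LinearIndependent F (K.subtype ∘ f) := hf.map' K.subtype K.ker_subtype
  refine ⟨Submodule.span F (Set.range (K.subtype ∘ f)), ?_, ?_⟩
  · rw [Submodule.span_le]
    rintro x ⟨i, rfl⟩
    exact (f i).2
  · rw [finrank_span_eq_card hg, Fintype.card_fin]

lemma proj_rank_nullity {F : Type*} [Field F] {n : ℕ}
    (C : Submodule F (Fin n → F)) (R : Finset (Fin n)) :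
    Module.finrank F (proj C R) +
      Module.finrank F (LinearMap.ker
        ((LinearMap.funLeft F F (fun j : R => (j : Fin n))).comp C.subtype))
      = Module.finrank F C := by
  have h := LinearMap.finrank_range_add_finrank_ker
    ((LinearMap.funLeft F F (fun j : R => (j : Fin n))).comp C.subtype)
  rwa [LinearMap.range_comp, Submodule.range_subtype] at h

private lemma arith1 {t k P X : ℕ} (h1 : t ≤ X) (h2 : P + X = k) : P ≤ k - t := by omega

private lemma arith2 {t k P X : ℕ} (h0 : t ≤ k) (h2 : P + X = k) (h3 : P ≤ k - t) : t ≤ X := by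
  omega

private lemma arith3 {n g nc cc r : ℕ} (h1 : g ≤ nc) (h2 : nc ≤ cc) (h3 : cc = n - r)
    (h4 : r ≤ n) : r ≤ n - g := by omega

theorem support_dimension_duality
    {F : Type*} [Field F] {n k : ℕ}
    (C : Submodule F (Fin n → F))
    (hk : Module.finrank F C = k)
    (hnondeg : ∀ i : Fin n, ∃ v ∈ C, v i ≠ 0) :
    ∀ t : ℕ, 1 ≤ t → t ≤ k →
      IsGreatest {w : ℕ | ∃ R : Finset (Fin n),
          Module.finrank F (proj C R) ≤ k - t ∧ R.card = w}
        (n - gweight C t) := by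
  classical
  intro t ht1 htk
  -- the defining set of the generalized weight is nonempty, so `sInf` is attained
  have hne : { w | ∃ E : Submodule F (Fin n → F), E ≤ C ∧ Module.finrank F E = t ∧
      {i | ∃ v ∈ E, v i ≠ 0}.ncard = w }.Nonempty := by
    obtain ⟨E, hEC, hEt⟩ := exists_le_finrank_eq C (htk.trans_eq hk.symm)
    exact ⟨_, E, hEC, hEt, rfl⟩
  have hmem : gweight C t ∈ { w | ∃ E : Submodule F (Fin n → F), E ≤ C ∧
      Module.finrank F E = t ∧ {i | ∃ v ∈ E, v i ≠ 0}.ncard = w } := Nat.sInf_mem hne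
  obtain ⟨E₀, hE₀C, hE₀t, hS⟩ := hmem
  constructor
  · -- membership: the complement of the support of a minimal subcode works
    have hSfin : ({i | ∃ v ∈ E₀, v i ≠ 0} : Set (Fin n)).Finite := Set.toFinite _
    refine ⟨hSfin.toFinsetᶜ, ?_, ?_⟩
    · -- dimension bound
      have hsub : E₀.comap C.subtype ≤ LinearMap.ker
          ((LinearMap.funLeft F F
            (fun j : (hSfin.toFinsetᶜ : Finset (Fin n)) => (j : Fin n))).comp C.subtype) := by
        intro v hv
        simp only [Submodule.mem_comap] at hv
        rw [LinearMap.mem_ker]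
        funext j
        have hj : (j : Fin n) ∉ ({i | ∃ v ∈ E₀, v i ≠ 0} : Set (Fin n)) := by
          have h2 := j.2
          simp only [Finset.mem_compl, Set.Finite.mem_toFinset] at h2
          exact h2
        by_contra hne0
        exact hj ⟨(v : Fin n → F), hv, by simpa [LinearMap.funLeft] using hne0⟩
      have hker : t ≤ Module.finrank F (LinearMap.ker
          ((LinearMap.funLeft F F
            (fun j : (hSfin.toFinsetᶜ : Finset (Fin n)) => (j : Fin n))).comp C.subtype)) := by
        have heq : Module.finrank F (E₀.comap C.subtype) = t := by
          rw [LinearEquiv.finrank_eq (Submodule.comapSubtypeEquivOfLe hE₀C), hE₀t]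
        rw [← heq]
        exact Submodule.finrank_mono hsub
      have hrn := proj_rank_nullity C hSfin.toFinsetᶜ
      rw [hk] at hrn
      exact arith1 hker hrn
    · -- cardinality
      rw [Finset.card_compl, Fintype.card_fin,
        ← Set.ncard_eq_toFinset_card _ hSfin, hS]
  · -- upper bound
    rintro w ⟨R, hRdim, rfl⟩
    have hrn := proj_rank_nullity C R
    rw [hk] at hrn
    have hkert : t ≤ Module.finrank F (LinearMap.ker
        ((LinearMap.funLeft F F (fun j : R => (j : Fin n))).comp C.subtype)) := by
      exact arith2 htk hrn hRdim
    have hKrank : Module.finrank F ((LinearMap.ker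
          ((LinearMap.funLeft F F (fun j : R => (j : Fin n))).comp C.subtype)).map C.subtype)
        = Module.finrank F (LinearMap.ker
          ((LinearMap.funLeft F F (fun j : R => (j : Fin n))).comp C.subtype)) :=
      (LinearEquiv.finrank_eq
        (Submodule.equivMapOfInjective C.subtype (Submodule.injective_subtype C) _)).symm
    obtain ⟨E, hEK, hEt⟩ :=
      exists_le_finrank_eq
        ((LinearMap.ker
          ((LinearMap.funLeft F F (fun j : R => (j : Fin n))).comp C.subtype)).map C.subtype)
        (hkert.trans_eq hKrank.symm)
    have hEC : E ≤ C := hEK.trans (Submodule.map_subtype_le C _)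
    -- the support of E avoids R
    have hsupp : {i | ∃ v ∈ E, v i ≠ 0} ⊆ (↑R : Set (Fin n))ᶜ := by
      rintro i ⟨v, hvE, hvi⟩ hiR
      obtain ⟨u, hu, rfl⟩ := hEK hvE
      have h0 : ((LinearMap.funLeft F F (fun j : R => (j : Fin n))).comp C.subtype) u = 0 := hu
      have h1 := congrFun h0 ⟨i, hiR⟩
      simp only [LinearMap.comp_apply, LinearMap.funLeft_apply, Pi.zero_apply] at h1
      exact hvi h1
    have hd_le : gweight C t ≤ {i | ∃ v ∈ E, v i ≠ 0}.ncard :=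
      Nat.sInf_le ⟨E, hEC, hEt, rfl⟩
    have hcard : {i | ∃ v ∈ E, v i ≠ 0}.ncard ≤ ((↑R : Set (Fin n))ᶜ).ncard :=
      Set.ncard_le_ncard hsupp (Set.toFinite _)
    have hcc : ((↑R : Set (Fin n))ᶜ).ncard = n - R.card := by
      rw [← Finset.coe_compl, Set.ncard_coe_finset, Finset.card_compl, Fintype.card_fin]
    have hRn : R.card ≤ n := by
      simpa using Finset.card_le_card (Finset.subset_univ R)
    exact arith3 hd_le hcard hcc hRn
end

section
/- Let C be a nondegenerate linear [n,k] code of locality r with k > r. Then the (k-r)-th generalized Hamming weight satisfies d_{k-r} ≤ n - r - 1. -/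
/-- Locality `r`: every coordinate `i` has a recovery set `R` with `i ∉ R`,
`#R ≤ r`, such that codewords agreeing on `R` agree at `i`. -/
def HasLocality {F : Type*} [Field F] {n : ℕ} (C : Submodule F (Fin n → F)) (r : ℕ) : Prop :=
  ∀ i : Fin n, ∃ R : Finset (Fin n), i ∉ R ∧ R.card ≤ r ∧
    ∀ u ∈ C, ∀ v ∈ C, (∀ j ∈ R, u j = v j) → u i = v i

/-! Pick a coordinate `i` and, by locality, a set `S` of exactly `r` other coordinates such that a
codeword vanishing on `S` also vanishes at `i`. The codewords vanishing on `S` form a subcode of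
dimension at least `k - r`, and any `(k - r)`-dimensional subspace of it has support outside
`S ∪ {i}`, hence of size at most `n - r - 1`. -/

open Module Finset

namespace Submodule

variable {K V : Type*} [DivisionRing K] [AddCommGroup V] [Module K V]

theorem exists_le_finrank_eq (p : Submodule K V) [FiniteDimensional K p] {t : ℕ}
    (ht : t ≤ finrank K p) : ∃ q ≤ p, finrank K q = t := by
  obtain ⟨f, hf⟩ := exists_linearIndependent_of_le_finrank ht
  refine ⟨span K (Set.range (p.subtype ∘ f)), ?_, ?_⟩
  · rw [span_le, Set.range_comp]
    exact fun _ ⟨x, _, hx⟩ ↦ hx ▸ x.2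
  · rw [finrank_span_eq_card (hf.map' p.subtype p.ker_subtype), Fintype.card_fin]

theorem finrank_le_finrank_inf_ker_add {W : Type*} [AddCommGroup W] [Module K W]
    [FiniteDimensional K V] [FiniteDimensional K W] (p : Submodule K V) (f : V →ₗ[K] W) :
    finrank K p ≤ finrank K ↥(p ⊓ LinearMap.ker f) + finrank K W := by
  have hrank := (f.domRestrict p).finrank_range_add_finrank_ker
  rw [LinearMap.ker_domRestrict, (equivSubtypeMap p _).finrank_eq, map_comap_subtype] at hrank
  have := (LinearMap.range (f.domRestrict p)).finrank_le
  omega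

end Submodule

section Support

variable {F ι : Type*} [Field F]

theorem ncard_support_add_card_le_of_forall_eq_zero [Fintype ι] [DecidableEq ι]
    {E : Submodule F (ι → F)} {T : Finset ι} (hT : ∀ v ∈ E, ∀ j ∈ T, v j = 0) :
    {i | ∃ v ∈ E, v i ≠ 0}.ncard + #T ≤ Fintype.card ι := by
  have hsub : {i | ∃ v ∈ E, v i ≠ 0} ⊆ ↑Tᶜ := fun i ⟨v, hv, hvi⟩ ↦ by
    simpa using fun hi ↦ hvi (hT v hv i hi)
  have hcard := Set.ncard_le_ncard hsub
  rw [Set.ncard_coe_finset, card_compl] at hcard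
  have := T.card_le_univ
  omega

theorem mem_ker_funLeft_iff {S : Finset ι} {v : ι → F} :
    v ∈ LinearMap.ker (LinearMap.funLeft F F ((↑) : S → ι)) ↔ ∀ j ∈ S, v j = 0 := by
  simp [funext_iff]

end Support

section Gweight

variable {F : Type*} [Field F] {n : ℕ}

theorem gweight_le_ncard_support {C E : Submodule F (Fin n → F)} {t : ℕ} (hEC : E ≤ C)
    (hE : finrank F E = t) : gweight C t ≤ {i | ∃ v ∈ E, v i ≠ 0}.ncard :=
  Nat.sInf_le ⟨E, hEC, hE, rfl⟩

theorem gweight_add_card_le_of_forall_eq_zero {C : Submodule F (Fin n → F)} (S T : Finset (Fin n))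
    {t : ℕ} (hST : ∀ v ∈ C, (∀ j ∈ S, v j = 0) → ∀ j ∈ T, v j = 0)
    (ht : t + #S ≤ finrank F C) : gweight C t + #T ≤ n := by
  have hD : t ≤ finrank F ↥(C ⊓ LinearMap.ker (LinearMap.funLeft F F ((↑) : S → Fin n))) := by
    have := C.finrank_le_finrank_inf_ker_add (LinearMap.funLeft F F ((↑) : S → Fin n))
    rw [finrank_fintype_fun_eq_card, Fintype.card_coe] at this
    omega
  obtain ⟨E, hED, hE⟩ := Submodule.exists_le_finrank_eq _ hD
  have hET : ∀ v ∈ E, ∀ j ∈ T, v j = 0 := fun v hv ↦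
    have hvD := hED hv
    hST v hvD.1 (mem_ker_funLeft_iff.mp hvD.2)
  have hsupp := ncard_support_add_card_le_of_forall_eq_zero hET
  have hgw := gweight_le_ncard_support (hED.trans inf_le_left) hE
  rw [Fintype.card_fin] at hsupp
  omega

theorem HasLocality.exists_card_eq_forall_eq_zero {C : Submodule F (Fin n → F)} {r : ℕ}
    (hloc : HasLocality C r) (i : Fin n) (hrn : r < n) :
    ∃ S : Finset (Fin n), i ∉ S ∧ #S = r ∧ ∀ v ∈ C, (∀ j ∈ S, v j = 0) → v i = 0 := by
  obtain ⟨R, hiR, hRr, hrec⟩ := hloc i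
  have hRi : R ⊆ {i}ᶜ := fun j hj ↦ by simpa using ne_of_mem_of_not_mem hj hiR
  obtain ⟨S, hRS, hSi, hS⟩ :=
    exists_subsuperset_card_eq hRi hRr (by rw [card_compl, card_singleton, Fintype.card_fin]; omega)
  refine ⟨S, fun hi ↦ by simpa using hSi hi, hS, fun v hv hvS ↦ ?_⟩
  exact hrec v hv 0 C.zero_mem fun j hj ↦ hvS j (hRS hj)

end Gweight

theorem gweight_k_sub_r_le_general
    {F : Type*} [Field F] {n k r : ℕ}
    (C : Submodule F (Fin n → F))
    (hk : Module.finrank F C = k)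
    (hkr : r < k) (hloc : HasLocality C r) :
    gweight C (k - r) + r + 1 ≤ n := by
  have hkn : k ≤ n := by simpa [hk] using C.finrank_le
  let i : Fin n := ⟨0, by omega⟩
  obtain ⟨S, hiS, hS, hSi⟩ := hloc.exists_card_eq_forall_eq_zero i (by omega)
  have hST : ∀ v ∈ C, (∀ j ∈ S, v j = 0) → ∀ j ∈ insert i S, v j = 0 := fun v hv hvS j hj ↦ by
    rcases mem_insert.mp hj with rfl | hj
    exacts [hSi v hv hvS, hvS j hj]
  have := gweight_add_card_le_of_forall_eq_zero S (insert i S) hST (t := k - r) (by omega)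
  rwa [card_insert_of_notMem hiS, hS, ← add_assoc] at this

theorem gweight_k_sub_r_le
    {F : Type*} [Field F] {n k r : ℕ}
    (C : Submodule F (Fin n → F))
    (hk : Module.finrank F C = k)
    (hnondeg : ∀ i : Fin n, ∃ v ∈ C, v i ≠ 0)
    (hr1 : 1 ≤ r) (hkr : r < k) (hloc : HasLocality C r) :
    gweight C (k - r) + r + 1 ≤ n :=
  gweight_k_sub_r_le_general C hk hkr hloc
end

section
/- Let q be a prime power, s an odd positive integer, and consider the curve Y^q + Y = X^{q^s + 1} over F_{q^{2s}}. The number of affine rational points (α, β) ∈ F_{q^{2s}}^2 with β^q + β = α^{q^s+1} is exactly q^{2s+1}. -/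
open Polynomial Finset

/-- The number of roots of a nonzero polynomial is at most its natural degree. -/
lemma KKO_card_isRoot_le {F : Type*} [Field F] (P : Polynomial F) (hP : P ≠ 0) :
    Nat.card {x : F // P.IsRoot x} ≤ P.natDegree := by
  classical
  have h1 : {x : F | P.IsRoot x} = ↑P.roots.toFinset := by
    ext x; simp [Polynomial.mem_roots hP]
  calc Nat.card {x : F // P.IsRoot x} = ({x : F | P.IsRoot x} : Set F).ncard :=
        (Nat.card_coe_set_eq _)
    _ = P.roots.toFinset.card := by rw [h1, Set.ncard_coe_finset]
    _ ≤ P.roots.card := Multiset.toFinset_card_le _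
    _ ≤ P.natDegree := Polynomial.card_roots' P

/-- Bound for solutions of `x ^ n + x = 0`. -/
lemma KKO_card_pow_add_le {F : Type*} [Field F] (n : ℕ) (hn : 1 < n) :
    Nat.card {x : F // x ^ n + x = 0} ≤ n := by
  have hP : (X ^ n + X : Polynomial F) ≠ 0 := by
    intro h
    have := congrArg (fun P => Polynomial.coeff P 1) h
    simp only [coeff_add, coeff_X_pow, coeff_X_one, coeff_zero] at this
    rw [if_neg (by omega : ¬ (1 = n)), zero_add] at this
    exact one_ne_zero this
  calc Nat.card {x : F // x ^ n + x = 0}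
      = Nat.card {x : F // (X ^ n + X : Polynomial F).IsRoot x} := by
        refine Nat.card_congr (Equiv.subtypeEquivRight fun x => ?_)
        simp [Polynomial.IsRoot]
    _ ≤ (X ^ n + X : Polynomial F).natDegree := KKO_card_isRoot_le _ hP
    _ ≤ n := le_trans (natDegree_add_le _ _) (by simp [hn.le])

/-- Bound for solutions of `x ^ n = x`. -/
lemma KKO_card_pow_eq_le {F : Type*} [Field F] (n : ℕ) (hn : 1 < n) :
    Nat.card {x : F // x ^ n = x} ≤ n := by
  have hP : (X ^ n - X : Polynomial F) ≠ 0 := by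
    intro h
    have := congrArg (fun P => Polynomial.coeff P 1) h
    simp only [coeff_sub, coeff_X_pow, coeff_X_one, coeff_zero] at this
    rw [if_neg (by omega : ¬ (1 = n)), zero_sub, neg_eq_zero] at this
    exact one_ne_zero this
  calc Nat.card {x : F // x ^ n = x}
      = Nat.card {x : F // (X ^ n - X : Polynomial F).IsRoot x} := by
        refine Nat.card_congr (Equiv.subtypeEquivRight fun x => ?_)
        simp [Polynomial.IsRoot, sub_eq_zero]
    _ ≤ (X ^ n - X : Polynomial F).natDegree := KKO_card_isRoot_le _ hP
    _ ≤ n := le_trans (natDegree_sub_le _ _) (by simp [hn.le])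

/-- First isomorphism theorem counting for additive maps on a finite field. -/
lemma KKO_card_range_mul_card_ker {F : Type*} [Field F] [Fintype F] (f : F →+ F) :
    Nat.card f.range * Nat.card f.ker = Fintype.card F := by
  rw [← Nat.card_eq_fintype_card, AddSubgroup.card_eq_card_quotient_mul_card_addSubgroup f.ker,
    Nat.card_congr (QuotientAddGroup.quotientKerEquivRange f).toEquiv]

/-- Fibers of an additive map over points of its range have the cardinality of the kernel. -/
lemma KKO_card_fiber {F : Type*} [Field F] (f : F →+ F) (c : F) (hc : c ∈ f.range) :
    Nat.card {x : F // f x = c} = Nat.card f.ker := by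
  obtain ⟨x₀, hx₀⟩ := hc
  refine Nat.card_congr ⟨fun x => ⟨x.1 - x₀, ?_⟩, fun y => ⟨y.1 + x₀, ?_⟩, ?_, ?_⟩
  · simp [AddMonoidHom.mem_ker, map_sub, x.2, hx₀]
  · simp [map_add, AddMonoidHom.mem_ker.mp y.2, hx₀]
  · intro x; ext; simp
  · intro y; ext; simp

/-- Point count of the Kondo–Katagiri–Ogihara curve `Y^q + Y = X^{q^s+1}`
over `F_{q^{2s}}`, for `s` odd. -/
theorem point_count_KKO
    (p m q s : ℕ) (hp : p.Prime) (hm : 0 < m) (hq : q = p ^ m)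
    (hs : 0 < s) (hodd : Odd s)
    (F : Type*) [Field F] [Fintype F] (hF : Fintype.card F = q ^ (2 * s)) :
    Nat.card {ab : F × F // ab.2 ^ q + ab.2 = ab.1 ^ (q ^ s + 1)} = q ^ (2 * s + 1) := by
  classical
  have hq1 : 1 < q := hq ▸ Nat.one_lt_pow hm.ne' hp.one_lt
  -- characteristic of F is p
  obtain ⟨r, hr⟩ := CharP.exists F
  haveI : CharP F r := hr
  have hrp : r.Prime := CharP.char_is_prime F r
  obtain ⟨n, -, hcard⟩ := FiniteField.card F r
  have hrdvd : r ∣ p := by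
    refine hrp.dvd_of_dvd_pow (n := m * (2 * s)) ?_
    have : r ∣ r ^ (n : ℕ) := dvd_pow_self r n.ne_zero
    rwa [← hcard, hF, hq, ← pow_mul] at this
  have hrpeq : r = p := (Nat.prime_dvd_prime_iff_eq hrp hp).mp hrdvd
  subst hrpeq
  haveI : Fact r.Prime := ⟨hp⟩
  haveI : ExpChar F r := ExpChar.prime hp
  -- Frobenius-type additivity
  have hfrob : ∀ (k : ℕ) (a b : F), (a + b) ^ q ^ k = a ^ q ^ k + b ^ q ^ k := by
    intro k a b
    rw [hq, ← pow_mul, add_pow_char_pow]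
  have hpowcard : ∀ x : F, x ^ q ^ (2 * s) = x := by
    intro x; rw [← hF, FiniteField.pow_card]
  -- (-1)^q = -1 in F
  have h1q : (-1 : F) ^ q = -1 := by
    by_cases h2 : r = 2
    · subst h2
      haveI : CharP F 2 := ‹_›
      rw [show (-1 : F) = 1 from CharTwo.neg_eq (1 : F), one_pow]
    · exact Odd.neg_one_pow (hq ▸ (hp.odd_of_ne_two h2).pow)
  -- the additive maps T, V and the functions u n
  set T : F →+ F := AddMonoidHom.mk' (fun x => x ^ q + x)
      (fun a b => by
        have := hfrob 1 a b; rw [pow_one] at this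
        show (a + b) ^ q + (a + b) = (a ^ q + a) + (b ^ q + b)
        rw [this]; ring) with hTdef
  have hT : ∀ x : F, T x = x ^ q + x := fun _ => rfl
  set V : F →+ F := AddMonoidHom.mk' (fun x => x ^ q ^ s + x)
      (fun a b => by
        show (a + b) ^ q ^ s + (a + b) = (a ^ q ^ s + a) + (b ^ q ^ s + b)
        rw [hfrob]; ring) with hVdef
  have hV : ∀ x : F, V x = x ^ q ^ s + x := fun _ => rfl
  set u : ℕ → F → F := fun n x => ∑ i ∈ Finset.range n, (-1 : F) ^ i * x ^ q ^ i with hudef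
  -- key exponent identity
  have hqq : ∀ (i : ℕ) (x : F), (x ^ q) ^ q ^ i = x ^ q ^ (i + 1) := by
    intro i x
    rw [← pow_mul, ← pow_succ']
  -- telescoping
  have htel : ∀ (n : ℕ) (x : F), u n (T x) = x - (-1 : F) ^ n * x ^ q ^ n := by
    intro n x
    induction n with
    | zero => simp [hudef]
    | succ n ih =>
      have hstep : u (n + 1) (T x) = u n (T x) + (-1 : F) ^ n * (T x) ^ q ^ n := by
        simp [hudef, Finset.sum_range_succ]
      rw [hstep, ih, hT, hfrob n (x ^ q) x, hqq]
      ring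
  -- T commutes with u n
  have hcomm : ∀ (n : ℕ) (x : F), T (u n x) = u n (T x) := by
    intro n x
    have hfs : (u n x) ^ q = u n (x ^ q) := by
      simp only [hudef]
      rw [hq, sum_pow_char_pow, ← hq]
      refine Finset.sum_congr rfl fun i _ => ?_
      rw [mul_pow,
        show ((-1 : F) ^ i) ^ q = (-1 : F) ^ i by rw [← pow_mul, mul_comm, pow_mul, h1q],
        ← pow_mul, mul_comm (q ^ i) q, pow_mul]
    have : u n (x ^ q) + u n x = u n (x ^ q + x) := by
      simp only [hudef, ← Finset.sum_add_distrib]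
      refine Finset.sum_congr rfl fun i _ => ?_
      rw [hfrob]; ring
    rw [hT, hfs, this, hT]
  -- cardinalities
  have hkerT_le : Nat.card T.ker ≤ q := by
    refine le_trans (le_of_eq (Nat.card_congr (Equiv.subtypeEquivRight fun x => ?_)))
      (KKO_card_pow_add_le q hq1)
    simp [AddMonoidHom.mem_ker, hT]
  have hqs1 : 1 < q ^ s := Nat.one_lt_pow hs.ne' hq1
  have hkerV_le : Nat.card V.ker ≤ q ^ s := by
    refine le_trans (le_of_eq (Nat.card_congr (Equiv.subtypeEquivRight fun x => ?_)))
      (KKO_card_pow_add_le (q ^ s) hqs1)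
    simp [AddMonoidHom.mem_ker, hV]
  -- range T ⊆ roots of the degree q^(2s-1) polynomial behind u (2s)
  have hu2s : ∀ x : F, u (2 * s) (T x) = 0 := by
    intro x
    rw [htel, Even.neg_one_pow ⟨s, two_mul s⟩, one_mul, hpowcard, sub_self]
  have hrangeT_le : Nat.card T.range ≤ q ^ (2 * s - 1) := by
    -- the polynomial ∑ i < 2s, (-1)^i X^(q^i)
    set P : Polynomial F := ∑ i ∈ Finset.range (2 * s), C ((-1 : F) ^ i) * X ^ q ^ i with hPdef
    have hPeval : ∀ x : F, P.eval x = u (2 * s) x := by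
      intro x; simp [hPdef, hudef, eval_finset_sum]
    have hP0 : P ≠ 0 := by
      intro h
      have h1 : P.coeff 1 = 1 := by
        rw [hPdef, finset_sum_coeff]
        have hco : ∀ i ∈ Finset.range (2 * s),
            (C ((-1 : F) ^ i) * X ^ q ^ i).coeff 1 = if i = 0 then 1 else 0 := by
          intro i _
          rcases Nat.eq_zero_or_pos i with rfl | hi
          · simp
          · rw [if_neg hi.ne', coeff_C_mul, coeff_X_pow, if_neg (by
              have : 1 < q ^ i := Nat.one_lt_pow hi.ne' hq1
              omega), mul_zero]
        rw [Finset.sum_congr rfl hco,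
          Finset.sum_ite_eq' (Finset.range (2 * s)) 0 (fun _ => (1 : F)),
          if_pos (Finset.mem_range.mpr (by omega))]
      rw [h] at h1
      simp at h1
    have hPdeg : P.natDegree ≤ q ^ (2 * s - 1) := by
      refine le_trans (Polynomial.natDegree_sum_le _ _) ?_
      rw [Finset.fold_max_le]
      refine ⟨Nat.zero_le _, fun i hi => ?_⟩
      refine le_trans (natDegree_C_mul_X_pow_le _ _) (Nat.pow_le_pow_right (by omega) ?_)
      have := Finset.mem_range.mp hi
      omega
    have hinj : Function.Injective
        (fun y : T.range => (⟨y.1, by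
          obtain ⟨x, hx⟩ := y.2
          rw [Polynomial.IsRoot, hPeval, ← hx, hu2s]⟩ : {x : F // P.IsRoot x})) := by
      intro a b hab
      have h2 := congrArg (fun z : {x : F // P.IsRoot x} => z.val) hab
      exact Subtype.ext h2
    calc Nat.card T.range ≤ Nat.card {x : F // P.IsRoot x} :=
          Nat.card_le_card_of_injective _ hinj
      _ ≤ P.natDegree := KKO_card_isRoot_le _ hP0
      _ ≤ q ^ (2 * s - 1) := hPdeg
  -- card of kernel of T is exactly q
  have hprod : Nat.card T.range * Nat.card T.ker = q ^ (2 * s) :=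
    (KKO_card_range_mul_card_ker T).trans hF
  have hkerT : Nat.card T.ker = q := by
    have h1 : q ^ (2 * s) ≤ q ^ (2 * s - 1) * Nat.card T.ker := by
      rw [← hprod]
      exact Nat.mul_le_mul_right _ hrangeT_le
    have h2 : q ^ (2 * s - 1) * q ≤ q ^ (2 * s - 1) * Nat.card T.ker := by
      rwa [← pow_succ, show 2 * s - 1 + 1 = 2 * s by omega]
    have := Nat.le_of_mul_le_mul_left h2 (by positivity)
    omega
  -- range of V is the fixed field of x ↦ x^(q^s)
  have hrangeV : ∀ c : F, c ^ q ^ s = c → c ∈ V.range := by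
    intro c hc
    have hsub : (V.range : Set F) ⊆ {x : F | x ^ q ^ s = x} := by
      rintro y ⟨x, rfl⟩
      show (V x) ^ q ^ s = V x
      rw [hV, hfrob, ← pow_mul, ← pow_add, ← two_mul, hpowcard]
      ring
    have hFixle : Nat.card {x : F // x ^ q ^ s = x} ≤ q ^ s := KKO_card_pow_eq_le _ hqs1
    have hVrange_ge : q ^ s ≤ Nat.card V.range := by
      have hprodV : Nat.card V.range * Nat.card V.ker = q ^ (2 * s) :=
        (KKO_card_range_mul_card_ker V).trans hF
      by_contra hlt
      push_neg at hlt
      have : Nat.card V.range * Nat.card V.ker < q ^ s * q ^ s :=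
        Nat.mul_lt_mul_of_lt_of_le hlt hkerV_le (by positivity)
      rw [hprodV, ← pow_add, show s + s = 2 * s by ring] at this
      omega
    have heq : (V.range : Set F) = {x : F | x ^ q ^ s = x} := by
      refine Set.eq_of_subset_of_ncard_le hsub ?_ (Set.toFinite _)
      rw [← Nat.card_coe_set_eq, ← Nat.card_coe_set_eq]
      refine le_trans hFixle (le_trans hVrange_ge (le_of_eq ?_))
      rfl
    have : c ∈ (V.range : Set F) := heq ▸ (by exact hc)
    exact this
  -- every α^(q^s+1) is in the range of T
  have hrange : ∀ α : F, (α ^ (q ^ s + 1)) ∈ T.range := by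
    intro α
    have hc : (α ^ (q ^ s + 1)) ^ q ^ s = α ^ (q ^ s + 1) := by
      rw [← pow_mul, show (q ^ s + 1) * q ^ s = q ^ (2 * s) + q ^ s by
          rw [add_mul, one_mul, ← pow_add, ← two_mul],
        pow_add, hpowcard, pow_add, pow_one, mul_comm]
    obtain ⟨x, hx⟩ := hrangeV _ hc
    refine ⟨u s x, ?_⟩
    rw [hcomm, htel, Odd.neg_one_pow hodd, ← hx, hV]
    ring
  -- final count
  have hfiber : ∀ α : F, Nat.card {β : F // β ^ q + β = α ^ (q ^ s + 1)} = q := by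
    intro α
    calc Nat.card {β : F // β ^ q + β = α ^ (q ^ s + 1)}
        = Nat.card {β : F // T β = α ^ (q ^ s + 1)} :=
          Nat.card_congr (Equiv.subtypeEquivRight fun x => by rw [hT])
      _ = Nat.card T.ker := KKO_card_fiber T _ (hrange α)
      _ = q := hkerT
  calc Nat.card {ab : F × F // ab.2 ^ q + ab.2 = ab.1 ^ (q ^ s + 1)}
      = Nat.card ((α : F) × {β : F // β ^ q + β = α ^ (q ^ s + 1)}) :=
        Nat.card_congr (Equiv.subtypeProdEquivSigmaSubtype
          (fun (a b : F) => b ^ q + b = a ^ (q ^ s + 1)))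
    _ = ∑ α : F, Nat.card {β : F // β ^ q + β = α ^ (q ^ s + 1)} := by
        rw [Nat.card_eq_fintype_card, Fintype.card_sigma]
        exact Finset.sum_congr rfl fun α _ => (Nat.card_eq_fintype_card).symm
    _ = ∑ _α : F, q := Finset.sum_congr rfl fun α _ => hfiber α
    _ = q ^ (2 * s) * q := by rw [Finset.sum_const, Finset.card_univ, hF, smul_eq_mul]
    _ = q ^ (2 * s + 1) := by rw [pow_succ]
end
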